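/- For the three-qubit state |B⟩ = (|001⟩+|010⟩+|100⟩−|111⟩)/2, the maximal overlap with complex unit product states equals 1/√2, i.e. max_{unit a,b,c ∈ ℂ²} |⟨a⊗b⊗c|B⟩| = 1/√2, while the maximum over real unit product vectors equals 1/2. -/

import Mathlib

open scoped InnerProductSpace BigOperators

noncomputable section

/-- The elementary product tensor `a ⊗ b ⊗ c` of three qubit vectors. -/
def prodVec3 (a b c : EuclideanSpace ℂ (Fin 2)) :
    EuclideanSpace ℂ (Fin 2 × Fin 2 × Fin 2) :=
  WithLp.toLp 2 (fun p : Fin 2 × Fin 2 × Fin 2 => a p.1 * b p.2.1 * c p.2.2)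

/-- The (real) coefficients of the three-qubit state
`|B⟩ = (|001⟩+|010⟩+|100⟩−|111⟩)/2`. -/
def Bcoeff : Fin 2 × Fin 2 × Fin 2 → ℝ := fun p =>
  if p = (0, 0, 1) ∨ p = (0, 1, 0) ∨ p = (1, 0, 0) then 1 / 2
  else if p = (1, 1, 1) then -(1 / 2) else 0

/-- The state `|B⟩` as a vector in `(ℂ²)^{⊗3}`. -/
def Bstate : EuclideanSpace ℂ (Fin 2 × Fin 2 × Fin 2) :=
  WithLp.toLp 2 (fun p => (Bcoeff p : ℂ))

lemma inner_prodVec3_Bstate (a b c : EuclideanSpace ℂ (Fin 2)) :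
    ⟪prodVec3 a b c, Bstate⟫_ℂ =
      (starRingEnd ℂ) (a 0 * (b 0 * c 1 + b 1 * c 0) + a 1 * (b 0 * c 0 - b 1 * c 1)) / 2 := by
  simp [PiLp.inner_apply, RCLike.inner_apply, Fintype.sum_prod_type, Fin.sum_univ_two,
    Bstate, Bcoeff, prodVec3, Prod.ext_iff, Fin.ext_iff, -Fin.val_eq_zero_iff]
  ring

lemma norm_sq_sum_complex (a : EuclideanSpace ℂ (Fin 2)) (h : ‖a‖ = 1) :
    ‖a 0‖^2 + ‖a 1‖^2 = 1 := by
  have h2 := EuclideanSpace.norm_eq a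
  rw [h, eq_comm, Real.sqrt_eq_one, Fin.sum_univ_two] at h2
  linarith

lemma norm_sq_sum_real (a : EuclideanSpace ℝ (Fin 2)) (h : ‖a‖ = 1) :
    (a 0)^2 + (a 1)^2 = 1 := by
  have h2 := EuclideanSpace.norm_eq a
  rw [h, eq_comm, Real.sqrt_eq_one, Fin.sum_univ_two] at h2
  simp only [Real.norm_eq_abs, sq_abs] at h2
  linarith

lemma key_S_le_two (b0 b1 c0 c1 : ℂ) (hb : ‖b0‖^2 + ‖b1‖^2 = 1) (hc : ‖c0‖^2 + ‖c1‖^2 = 1) :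
    ‖b0*c1 + b1*c0‖^2 + ‖b0*c0 - b1*c1‖^2 ≤ 2 := by
  simp only [← Complex.normSq_eq_norm_sq] at *
  simp only [Complex.normSq_apply, Complex.add_re, Complex.add_im, Complex.sub_re,
    Complex.sub_im, Complex.mul_re, Complex.mul_im] at *
  set p1 := b0.re; set p2 := b0.im; set p3 := b1.re; set p4 := b1.im
  set q1 := c0.re; set q2 := c0.im; set q3 := c1.re; set q4 := c1.im
  have hu : 4*(p2*p3 - p1*p4)^2 ≤ 1 := by
    nlinarith [sq_nonneg (p1*p3 + p2*p4), sq_nonneg (p1^2+p2^2-p3^2-p4^2)]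
  have hv : 4*(q2*q3 - q1*q4)^2 ≤ 1 := by
    nlinarith [sq_nonneg (q1*q3 + q2*q4), sq_nonneg (q1^2+q2^2-q3^2-q4^2)]
  nlinarith [sq_nonneg (2*(p2*p3-p1*p4) - 2*(q2*q3-q1*q4)),
    sq_nonneg (2*(p2*p3-p1*p4) + 2*(q2*q3-q1*q4))]

lemma cs_step (a0 a1 x y : ℂ) (ha : ‖a0‖^2 + ‖a1‖^2 = 1) (hS : ‖x‖^2 + ‖y‖^2 ≤ 2) :
    ‖a0*x + a1*y‖ ≤ Real.sqrt 2 := by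
  have h1 : ‖a0*x + a1*y‖ ≤ ‖a0‖*‖x‖ + ‖a1‖*‖y‖ := by
    calc ‖a0*x + a1*y‖ ≤ ‖a0*x‖ + ‖a1*y‖ := norm_add_le _ _
    _ = ‖a0‖*‖x‖ + ‖a1‖*‖y‖ := by rw [norm_mul, norm_mul]
  have h2 : (‖a0‖*‖x‖ + ‖a1‖*‖y‖)^2 ≤ 2 := by nlinarith [sq_nonneg (‖a0‖*‖y‖ - ‖a1‖*‖x‖)]
  have h3 : ‖a0*x + a1*y‖^2 ≤ 2 := by
    nlinarith [norm_nonneg (a0*x+a1*y), norm_nonneg a0, norm_nonneg a1, norm_nonneg x,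
      norm_nonneg y, mul_nonneg (norm_nonneg a0) (norm_nonneg x),
      mul_nonneg (norm_nonneg a1) (norm_nonneg y)]
  nlinarith [Real.sq_sqrt (by norm_num : (0:ℝ) ≤ 2), Real.sqrt_nonneg 2,
    norm_nonneg (a0*x+a1*y)]

/-- For `|B⟩ = (|001⟩+|010⟩+|100⟩−|111⟩)/2`, the maximal overlap with complex unit
product states equals `1/√2`, while the maximum over real unit product vectors
equals `1/2`. -/
theorem Bstate_injective_norms :
    IsGreatest {r : ℝ | ∃ a b c : EuclideanSpace ℂ (Fin 2),
        ‖a‖ = 1 ∧ ‖b‖ = 1 ∧ ‖c‖ = 1 ∧ r = ‖⟪prodVec3 a b c, Bstate⟫_ℂ‖}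
      (1 / Real.sqrt 2) ∧
    IsGreatest {r : ℝ | ∃ a b c : EuclideanSpace ℝ (Fin 2),
        ‖a‖ = 1 ∧ ‖b‖ = 1 ∧ ‖c‖ = 1 ∧
        r = |∑ i : Fin 2, ∑ j : Fin 2, ∑ l : Fin 2,
          a i * b j * c l * Bcoeff (i, j, l)|}
      (1 / 2) := by
  have hs2 : Real.sqrt 2 > 0 := by positivity
  have hs2sq : (Real.sqrt 2)^2 = 2 := Real.sq_sqrt (by norm_num)
  constructor
  · constructor
    · -- membership: witness a = b = c = (1/√2, I/√2)
      set s : ℝ := Real.sqrt 2 with hsdef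
      set v : EuclideanSpace ℂ (Fin 2) :=
        (WithLp.equiv 2 (Fin 2 → ℂ)).symm ![(s:ℂ)/2, Complex.I*(s:ℂ)/2] with hv
      have hv0 : v 0 = (s:ℂ)/2 := rfl
      have hv1 : v 1 = Complex.I*(s:ℂ)/2 := rfl
      have h0 : ‖(s:ℂ)/2‖ = s/2 := by
        rw [norm_div, Complex.norm_real, Real.norm_eq_abs, abs_of_pos hs2]
        norm_num
      have h1 : ‖Complex.I*(s:ℂ)/2‖ = s/2 := by
        rw [norm_div, norm_mul, Complex.norm_I, one_mul, Complex.norm_real,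
          Real.norm_eq_abs, abs_of_pos hs2]
        norm_num
      have hvn : ‖v‖ = 1 := by
        rw [EuclideanSpace.norm_eq, Fin.sum_univ_two, hv0, hv1, h0, h1, div_pow, hs2sq]
        rw [show (2:ℝ)/2^2 + 2/2^2 = 1 by norm_num, Real.sqrt_one]
      refine ⟨v, v, v, hvn, hvn, hvn, ?_⟩
      rw [inner_prodVec3_Bstate, hv0, hv1]
      have hsc : (s:ℂ) ≠ 0 := by
        simp only [ne_eq, Complex.ofReal_eq_zero]
        exact ne_of_gt hs2
      have hscsq : (s:ℂ)^2 = 2 := by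
        rw [← Complex.ofReal_pow, hs2sq]; norm_num
      have hval : (starRingEnd ℂ) (((s:ℂ)/2) * (((s:ℂ)/2) * (Complex.I*(s:ℂ)/2) +
          (Complex.I*(s:ℂ)/2) * ((s:ℂ)/2)) + (Complex.I*(s:ℂ)/2) * (((s:ℂ)/2) * ((s:ℂ)/2) -
          (Complex.I*(s:ℂ)/2) * (Complex.I*(s:ℂ)/2))) / 2 = -(Complex.I*(s:ℂ))/2 := by
        have hI : (starRingEnd ℂ) Complex.I = -Complex.I := Complex.conj_I
        have hs' : (starRingEnd ℂ) ((s:ℝ):ℂ) = ((s:ℝ):ℂ) := Complex.conj_ofReal s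
        simp only [map_div₀, map_add, map_sub, map_mul, map_one, hI, hs', map_ofNat]
        linear_combination (-(Complex.I*(s:ℂ))/4) * hscsq + ((s:ℂ)^3 * Complex.I / 16) * Complex.I_sq
      rw [hval, norm_div, norm_neg, norm_mul, Complex.norm_I, one_mul, Complex.norm_real,
        Real.norm_eq_abs, abs_of_pos hs2]
      rw [show ‖(2:ℂ)‖ = 2 by norm_num]
      rw [div_eq_div_iff (ne_of_gt hs2) (by norm_num : (2:ℝ) ≠ 0)]
      nlinarith [hs2sq]
    · -- upper bound
      rintro r ⟨a, b, c, ha, hb, hc, rfl⟩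
      rw [inner_prodVec3_Bstate]
      have ha' := norm_sq_sum_complex a ha
      have hb' := norm_sq_sum_complex b hb
      have hc' := norm_sq_sum_complex c hc
      have hS := key_S_le_two (b 0) (b 1) (c 0) (c 1) hb' hc'
      have hcs := cs_step (a 0) (a 1) (b 0 * c 1 + b 1 * c 0) (b 0 * c 0 - b 1 * c 1) ha' hS
      rw [norm_div, RCLike.norm_conj]
      have : ‖(2:ℂ)‖ = 2 := by norm_num
      rw [this]
      rw [div_le_div_iff₀ (by norm_num) hs2]
      nlinarith [hcs, hs2sq, hs2]
  · constructor
    · -- membership: witness |100⟩ ↦ use a = e1, b = e0, c = e0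
      refine ⟨EuclideanSpace.single 0 1, EuclideanSpace.single 0 1,
        EuclideanSpace.single 1 1, ?_, ?_, ?_, ?_⟩
      · rw [EuclideanSpace.norm_single]; norm_num
      · rw [EuclideanSpace.norm_single]; norm_num
      · rw [EuclideanSpace.norm_single]; norm_num
      · simp [Fin.sum_univ_two, EuclideanSpace.single_apply, Bcoeff, Prod.ext_iff, Fin.ext_iff,
          -Fin.val_eq_zero_iff]
    · -- upper bound
      rintro r ⟨a, b, c, ha, hb, hc, rfl⟩
      have ha' := norm_sq_sum_real a ha
      have hb' := norm_sq_sum_real b hb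
      have hc' := norm_sq_sum_real c hc
      rw [Fin.sum_univ_two]
      simp only [Fin.sum_univ_two]
      have hval : a 0 * b 0 * c 0 * Bcoeff (0,0,0) + a 0 * b 0 * c 1 * Bcoeff (0,0,1)
          + (a 0 * b 1 * c 0 * Bcoeff (0,1,0) + a 0 * b 1 * c 1 * Bcoeff (0,1,1))
          + (a 1 * b 0 * c 0 * Bcoeff (1,0,0) + a 1 * b 0 * c 1 * Bcoeff (1,0,1)
          + (a 1 * b 1 * c 0 * Bcoeff (1,1,0) + a 1 * b 1 * c 1 * Bcoeff (1,1,1)))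
          = (a 0 * (b 0 * c 1 + b 1 * c 0) + a 1 * (b 0 * c 0 - b 1 * c 1)) / 2 := by
        simp [Bcoeff, Prod.ext_iff, Fin.ext_iff]
        ring
      rw [hval]
      rw [abs_div, abs_of_pos (by norm_num : (0:ℝ) < 2)]
      obtain ⟨X, hX⟩ : ∃ X : ℝ,
          X = a 0 * (b 0 * c 1 + b 1 * c 0) + a 1 * (b 0 * c 0 - b 1 * c 1) := ⟨_, rfl⟩
      rw [← hX]
      have hxy : (b 0 * c 1 + b 1 * c 0)^2 + (b 0 * c 0 - b 1 * c 1)^2 = 1 := by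
        linear_combination (c 0^2 + c 1^2) * hb' + hc'
      have hid : X^2 + (a 0 * (b 0 * c 0 - b 1 * c 1) - a 1 * (b 0 * c 1 + b 1 * c 0))^2
          = (a 0^2 + a 1^2) * ((b 0 * c 1 + b 1 * c 0)^2 + (b 0 * c 0 - b 1 * c 1)^2) := by
        rw [hX]; ring
      rw [ha', hxy, mul_one] at hid
      have key : X^2 ≤ 1 := by
        have := sq_nonneg (a 0 * (b 0 * c 0 - b 1 * c 1) - a 1 * (b 0 * c 1 + b 1 * c 0))
        linarith
      clear hid hX hval ha hb hc ha' hb' hc'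
      have h2 : |X| ≤ 1 := by nlinarith [sq_abs X, abs_nonneg X]
      linarith
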